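/- Assume there are random variables C₁ ∈ L^{p₁}, C₂ ∈ L^{p₂}, C₄ ∈ L^{p₄} with p₁, p₂, p₄ > 0, real numbers β > 1 and r > 0 with β − r > 1 and pᵢ·r/3 > 1 for i ∈ {1,2,4}, a full-measure set Ω′ ⊆ Ω and measurable families (h_{ω,ε}) such that conditions (C2), (C3) and (C5) hold. Then there is a full-measure set Ω″ ⊆ Ω such that for every ω ∈ Ω″ and every ε ∈ I, the series Σ_{n=0}^{∞} L^{n}_{σ^{−n}ω,ε} ( L_{σ^{−(n+1)}ω,ε} − L_{σ^{−(n+1)}ω,0} ) h_{σ^{−(n+1)}ω,0} converges absolutely in 𝓑_w and its sum equals h_{ω,ε} − h_{ω,0}. -/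

import Mathlib

open MeasureTheory

noncomputable section

/-- `C ∈ L^p(Ω,𝓕,ℙ)` for a nonnegative random variable `C`. -/
def MemLpRV {Ω : Type*} [MeasurableSpace Ω] (ℙ : Measure Ω) (p : ℝ) (C : Ω → ℝ) : Prop :=
  Measurable C ∧ (∀ ω, 0 ≤ C ω) ∧ Integrable (fun ω => C ω ^ p) ℙ

/-- The cocycle `L^n_ω = L_{σ^{n-1}ω} ∘ ⋯ ∘ L_ω` (with `L⁰ = Id`). -/
def iterOp {Ω E : Type*} [NormedAddCommGroup E] [NormedSpace ℝ E]
    (σ : Ω → Ω) (L : Ω → E →L[ℝ] E) : ℕ → Ω → E →L[ℝ] E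
  | 0, _ => ContinuousLinearMap.id ℝ E
  | n + 1, ω => (iterOp σ L n (σ ω)).comp (L ω)

/-!
Put `bₙ = L^n_{σ^{-n}ω,ε} h_{σ^{-n}ω,0}`. Equivariance of `h_{·,0}` turns the `n`-th term of the
series into `bₙ₊₁ - bₙ`, and equivariance of `h_{·,ε}` gives
`bₙ - h_{ω,ε} = L^n_{σ^{-n}ω,ε} (h_{σ^{-n}ω,0} - h_{σ^{-n}ω,ε})`, the image of a vector with
`ψ = 0`; by (C2) and (C5) its norm is at most `2 C₁ C₄ (σ^{-n}ω) n^{-β}`. Since `σ⁻¹` preserves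
`ℙ` and `pᵢ r / 3 > 1`, Borel–Cantelli gives `Cᵢ(σ^{-n}ω) ≤ n^{r/3}` eventually for a.e. `ω`,
so `‖bₙ - h_{ω,ε}‖ = O(n^{2r/3-β})` is summable because `β - r > 1`, and the series telescopes
to `lim bₙ - b₀ = h_{ω,ε} - h_{ω,0}`.
-/

open Filter Topology

theorem MemLpRV.measureReal_lt_le {Ω : Type*} [MeasurableSpace Ω] {μ : Measure Ω}
    [IsFiniteMeasure μ] {p : ℝ} {C : Ω → ℝ} (hC : MemLpRV μ p C) (hp : 0 < p) {t : ℝ}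
    (ht : 0 < t) : μ.real {x | t < C x} ≤ (∫ x, C x ^ p ∂μ) / t ^ p := by
  obtain ⟨-, hC0, hCp⟩ := hC
  calc μ.real {x | t < C x} ≤ μ.real {x | t ^ p ≤ C x ^ p} :=
        measureReal_mono fun x hx => Real.rpow_le_rpow ht.le (le_of_lt hx) hp.le
    _ ≤ (∫ x, C x ^ p ∂μ) / t ^ p := by
        rw [le_div_iff₀' (Real.rpow_pos_of_pos ht p)]
        exact mul_meas_ge_le_integral_of_nonneg
          (ae_of_all _ fun x => Real.rpow_nonneg (hC0 x) p) hCp _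

/-- Borel–Cantelli along the orbit: the Markov bounds `μ {n ^ a < C} ≤ (∫ C ^ p) n ^ (-a p)`
are summable. -/
theorem MemLpRV.ae_eventually_iterate_le_rpow {Ω : Type*} [MeasurableSpace Ω] {μ : Measure Ω}
    [IsFiniteMeasure μ] {τ : Ω → Ω} (hτ : MeasurePreserving τ μ μ) {p a : ℝ} {C : Ω → ℝ}
    (hC : MemLpRV μ p C) (hp : 0 < p) (hpa : 1 < a * p) :
    ∀ᵐ ω ∂μ, ∀ᶠ n : ℕ in atTop, C (τ^[n] ω) ≤ (n : ℝ) ^ a := by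
  have hsum : Summable fun n : ℕ => μ.real {x | (n : ℝ) ^ a < C x} := by
    refine Summable.of_norm_bounded_eventually_nat
      ((Real.summable_nat_rpow_inv.2 hpa).mul_left (∫ x, C x ^ p ∂μ)) ?_
    filter_upwards [eventually_ge_atTop 1] with n hn
    have hn₀ : (0 : ℝ) < n := by exact_mod_cast hn
    rw [Real.norm_of_nonneg measureReal_nonneg, Real.rpow_mul hn₀.le, ← div_eq_mul_inv]
    exact hC.measureReal_lt_le hp (Real.rpow_pos_of_pos hn₀ a)
  have htsum : ∑' n : ℕ, μ (τ^[n] ⁻¹' {x | (n : ℝ) ^ a < C x}) ≠ ⊤ := by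
    have hpre (n : ℕ) : μ (τ^[n] ⁻¹' {x | (n : ℝ) ^ a < C x}) =
        ENNReal.ofReal (μ.real {x | (n : ℝ) ^ a < C x}) := by
      rw [(hτ.iterate n).measure_preimage
        (measurableSet_lt measurable_const hC.1).nullMeasurableSet, ofReal_measureReal]
    rw [tsum_congr hpre, ← ENNReal.ofReal_tsum_of_nonneg (fun _ => measureReal_nonneg) hsum]
    exact ENNReal.ofReal_ne_top
  filter_upwards [ae_eventually_notMem htsum] with ω hω
  filter_upwards [hω] with n hn using not_lt.1 hn

theorem summable_mul_rpow_mul_of_eventually_le {A B : ℕ → ℝ} {a b β : ℝ}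
    (hA₀ : ∀ n, 0 ≤ A n) (hB₀ : ∀ n, 0 ≤ B n) (hA : ∀ᶠ n in atTop, A n ≤ (n : ℝ) ^ a)
    (hB : ∀ᶠ n in atTop, B n ≤ (n : ℝ) ^ b) (hab : a + -β + b < -1) :
    Summable fun n : ℕ => A n * (n : ℝ) ^ (-β) * B n := by
  refine Summable.of_norm_bounded_eventually_nat (Real.summable_nat_rpow.2 hab) ?_
  filter_upwards [hA, hB, eventually_ge_atTop 1] with n hAn hBn hn
  have hn₀ : (0 : ℝ) < n := by exact_mod_cast hn
  rw [Real.norm_of_nonneg (by positivity [hA₀ n, hB₀ n]), Real.rpow_add hn₀, Real.rpow_add hn₀]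
  gcongr
  exact hB₀ n

theorem norm_map_sub_le_of_bound_on_ker {E F : Type*} [SeminormedAddCommGroup E]
    [NormedSpace ℝ E] [SeminormedAddCommGroup F] [NormedSpace ℝ F] {ι : E →L[ℝ] F}
    {ψ : F →L[ℝ] ℝ} {T : F → F} {K c : ℝ} (hK : 0 ≤ K)
    (hT : ∀ z, ψ (ι z) = 0 → ‖T (ι z)‖ ≤ K * ‖z‖) {x y : E} (hψ : ψ (ι x) = ψ (ι y))
    (hx : ‖x‖ ≤ c) (hy : ‖y‖ ≤ c) :
    ‖T (ι x - ι y)‖ ≤ 2 * (K * c) := by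
  rw [← map_sub]
  calc ‖T (ι (x - y))‖ ≤ K * ‖x - y‖ := hT _ (by rw [map_sub, map_sub, hψ, sub_self])
    _ ≤ K * (c + c) := by gcongr; exact (norm_sub_le x y).trans (add_le_add hx hy)
    _ = 2 * (K * c) := by ring

theorem hasSum_sub_succ_of_summable_norm_sub {E : Type*} [SeminormedAddCommGroup E]
    {b : ℕ → E} {l : E} (hb : Summable fun n => ‖b n - l‖) :
    Summable (fun n => ‖b (n + 1) - b n‖) ∧ HasSum (fun n => b (n + 1) - b n) (l - b 0) := by
  have hnorm : Summable fun n => ‖b (n + 1) - b n‖ := by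
    refine .of_nonneg_of_le (fun _ => norm_nonneg _) (fun n => ?_)
      (((summable_nat_add_iff 1).2 hb).add hb)
    rw [← sub_sub_sub_cancel_right (b (n + 1)) (b n) l]
    exact norm_sub_le _ _
  refine ⟨hnorm, (hasSum_iff_tendsto_nat_of_summable_norm hnorm).2 ?_⟩
  simp_rw [Finset.sum_range_sub]
  have hlim : Tendsto b atTop (𝓝 l) :=
    tendsto_iff_norm_sub_tendsto_zero.2 hb.tendsto_atTop_zero
  exact hlim.sub_const _

section BackwardOrbit

variable {Ω E : Type*} [NormedAddCommGroup E] [NormedSpace ℝ E] {σ σinv : Ω → Ω}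
  (L : Ω → E →L[ℝ] E)

theorem iterOp_succ_iterate_apply (hσ : Function.RightInverse σinv σ) (ω : Ω) (n : ℕ) (x : E) :
    iterOp σ L (n + 1) (σinv^[n + 1] ω) x =
      iterOp σ L n (σinv^[n] ω) (L (σinv^[n + 1] ω) x) := by
  rw [iterOp, ContinuousLinearMap.comp_apply, Function.iterate_succ_apply', hσ]

variable {L}

theorem iterOp_iterate_apply_of_equivariant (hσ : Function.RightInverse σinv σ) {v : Ω → E}
    {ω : Ω} (hv : ∀ n, L (σinv^[n + 1] ω) (v (σinv^[n + 1] ω)) = v (σinv^[n] ω)) (n : ℕ) :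
    iterOp σ L n (σinv^[n] ω) (v (σinv^[n] ω)) = v ω := by
  induction n with
  | zero => rfl
  | succ n ih => rw [iterOp_succ_iterate_apply L hσ, hv, ih]

theorem hasSum_iterOp_backward_orbit (hσ : Function.RightInverse σinv σ) {u v : Ω → E}
    {ω : Ω} (hv : ∀ n, L (σinv^[n + 1] ω) (v (σinv^[n + 1] ω)) = v (σinv^[n] ω))
    (hdecay : Summable fun n =>
      ‖iterOp σ L n (σinv^[n] ω) (u (σinv^[n] ω) - v (σinv^[n] ω))‖) :
    Summable (fun n => ‖iterOp σ L n (σinv^[n] ω)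
        (L (σinv^[n + 1] ω) (u (σinv^[n + 1] ω)) - u (σinv^[n] ω))‖) ∧
      HasSum (fun n => iterOp σ L n (σinv^[n] ω)
        (L (σinv^[n + 1] ω) (u (σinv^[n + 1] ω)) - u (σinv^[n] ω))) (v ω - u ω) := by
  set b : ℕ → E := fun n => iterOp σ L n (σinv^[n] ω) (u (σinv^[n] ω))
  have hb (n : ℕ) : iterOp σ L n (σinv^[n] ω)
      (L (σinv^[n + 1] ω) (u (σinv^[n + 1] ω)) - u (σinv^[n] ω)) = b (n + 1) - b n := by
    rw [map_sub, ← iterOp_succ_iterate_apply L hσ]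
  have hbv (n : ℕ) : b n - v ω = iterOp σ L n (σinv^[n] ω) (u (σinv^[n] ω) - v (σinv^[n] ω)) := by
    rw [map_sub, iterOp_iterate_apply_of_equivariant hσ hv]
  simp only [hb]
  simp only [← hbv] at hdecay
  exact hasSum_sub_succ_of_summable_norm_sub hdecay

end BackwardOrbit

theorem stmt_15_general
    {Ω : Type*} [MeasurableSpace Ω] (ℙ : Measure Ω) [IsProbabilityMeasure ℙ]
    (σ σinv : Ω → Ω)
    (hσ : MeasurePreserving σ ℙ ℙ) (hσinv : Measurable σinv)
    (hinv₁ : Function.LeftInverse σinv σ) (hinv₂ : Function.RightInverse σinv σ)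
    {Bw Bs Bss : Type*}
    [NormedAddCommGroup Bw] [NormedSpace ℝ Bw]
    [NormedAddCommGroup Bs] [NormedSpace ℝ Bs]
    [NormedAddCommGroup Bss] [NormedSpace ℝ Bss]
    (ιs : Bs →L[ℝ] Bw) (ιss : Bss →L[ℝ] Bs)
    (hιss : ∀ x : Bss, ‖ιss x‖ ≤ ‖x‖)
    (I : Set ℝ) (hI0 : (0 : ℝ) ∈ I)
    (Lw : ℝ → Ω → Bw →L[ℝ] Bw) (Ls : ℝ → Ω → Bs →L[ℝ] Bs) (Lss : ℝ → Ω → Bss →L[ℝ] Bss)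
    (hcomp_s : ∀ ε ω x, ιs (Ls ε ω x) = Lw ε ω (ιs x))
    (hcomp_ss : ∀ ε ω x, ιss (Lss ε ω x) = Ls ε ω (ιss x))
    (ψ : Bw →L[ℝ] ℝ)
    (p1 p4 : ℝ) (hp1 : 0 < p1) (hp4 : 0 < p4)
    (C1 C4 : Ω → ℝ)
    (hC1 : MemLpRV ℙ p1 C1) (hC4 : MemLpRV ℙ p4 C4)
    (β r : ℝ) (hr : 0 < r) (hβr : 1 < β - r)
    (hp1r : 1 < p1 * r / 3) (hp4r : 1 < p4 * r / 3)
    (Ω' : Set Ω) (hΩ' : ℙ Ω'ᶜ = 0)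
    (h : ℝ → Ω → Bss)
    -- (C2)
    (cond2 : ∀ n : ℕ, 1 ≤ n → ∀ ε ∈ I, ∀ ω ∈ Ω', ∀ x : Bs, ψ (ιs x) = 0 →
      ‖iterOp σ (Lw ε) n ω (ιs x)‖ ≤ C1 ω * (n : ℝ) ^ (-β) * ‖x‖)
    -- (C5)
    (cond5a : ∀ ε ∈ I, ∀ ω ∈ Ω', Lss ε ω (h ε ω) = h ε (σ ω))
    (cond5b : ∀ ε ∈ I, ∀ ω ∈ Ω', ψ (ιs (ιss (h ε ω))) = 1)
    (cond5c : ∀ ε ∈ I, ∀ ω ∈ Ω', ‖h ε ω‖ ≤ C4 ω) :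
    ∃ Ω'' : Set Ω, ℙ Ω''ᶜ = 0 ∧
      ∀ ω ∈ Ω'', ∀ ε ∈ I,
        Summable (fun n : ℕ =>
          ‖iterOp σ (Lw ε) n (σinv^[n] ω)
            (ιs (Ls ε (σinv^[n + 1] ω) (ιss (h 0 (σinv^[n + 1] ω))) -
              Ls 0 (σinv^[n + 1] ω) (ιss (h 0 (σinv^[n + 1] ω)))))‖) ∧
        HasSum (fun n : ℕ =>
          iterOp σ (Lw ε) n (σinv^[n] ω)
            (ιs (Ls ε (σinv^[n + 1] ω) (ιss (h 0 (σinv^[n + 1] ω))) -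
              Ls 0 (σinv^[n + 1] ω) (ιss (h 0 (σinv^[n + 1] ω))))))
          (ιs (ιss (h ε ω)) - ιs (ιss (h 0 ω))) := by
  have hσinv_mp : MeasurePreserving σinv ℙ ℙ :=
    MeasurePreserving.symm ⟨⟨σ, σinv, hinv₁, hinv₂⟩, hσ.measurable, hσinv⟩ hσ
  have hgood : ∀ᵐ ω ∂ℙ, (∀ n, σinv^[n] ω ∈ Ω') ∧
      (∀ᶠ n : ℕ in atTop, C1 (σinv^[n] ω) ≤ (n : ℝ) ^ (r / 3)) ∧
      (∀ᶠ n : ℕ in atTop, C4 (σinv^[n] ω) ≤ (n : ℝ) ^ (r / 3)) :=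
    (ae_all_iff.2 fun n => (hσinv_mp.iterate n).quasiMeasurePreserving.ae (ae_iff.2 hΩ')).and <|
      (hC1.ae_eventually_iterate_le_rpow hσinv_mp hp1 (by linarith)).and
        (hC4.ae_eventually_iterate_le_rpow hσinv_mp hp4 (by linarith))
  refine ⟨_, mem_ae_iff.1 hgood, ?_⟩
  rintro ω ⟨hΩ, hC1ω, hC4ω⟩ ε hε
  have hequiv : ∀ ε ∈ I, ∀ n, Lw ε (σinv^[n + 1] ω) (ιs (ιss (h ε (σinv^[n + 1] ω)))) =
      ιs (ιss (h ε (σinv^[n] ω))) := by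
    intro ε hε n
    rw [← hcomp_s, ← hcomp_ss, cond5a ε hε _ (hΩ (n + 1)), Function.iterate_succ_apply', hinv₂]
  have hsummand (n : ℕ) : ιs (Ls ε (σinv^[n + 1] ω) (ιss (h 0 (σinv^[n + 1] ω))) -
      Ls 0 (σinv^[n + 1] ω) (ιss (h 0 (σinv^[n + 1] ω)))) =
      Lw ε (σinv^[n + 1] ω) (ιs (ιss (h 0 (σinv^[n + 1] ω)))) - ιs (ιss (h 0 (σinv^[n] ω))) := by
    rw [map_sub, hcomp_s, hcomp_s, hequiv 0 hI0]
  have hdecay : Summable fun n => ‖iterOp σ (Lw ε) n (σinv^[n] ω)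
      (ιs (ιss (h 0 (σinv^[n] ω))) - ιs (ιss (h ε (σinv^[n] ω))))‖ := by
    refine .of_norm_bounded_eventually_nat ((summable_mul_rpow_mul_of_eventually_le
      (β := β) (fun _ => hC1.2.1 _) (fun _ => hC4.2.1 _) hC1ω hC4ω (by linarith)).mul_left 2) ?_
    filter_upwards [eventually_ge_atTop 1] with n hn
    rw [norm_norm]
    exact norm_map_sub_le_of_bound_on_ker
      (mul_nonneg (hC1.2.1 _) (Real.rpow_nonneg n.cast_nonneg _)) (cond2 n hn ε hε _ (hΩ n))
      (by rw [cond5b 0 hI0 _ (hΩ n), cond5b ε hε _ (hΩ n)])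
      ((hιss _).trans (cond5c 0 hI0 _ (hΩ n))) ((hιss _).trans (cond5c ε hε _ (hΩ n)))
  simp only [hsummand]
  exact hasSum_iterOp_backward_orbit (u := fun ω => ιs (ιss (h 0 ω)))
    (v := fun ω => ιs (ιss (h ε ω))) hinv₂ (hequiv ε hε) hdecay

theorem stmt_15
    {Ω : Type*} [MeasurableSpace Ω] (ℙ : Measure Ω) [IsProbabilityMeasure ℙ]
    (σ σinv : Ω → Ω)
    (hσ : MeasurePreserving σ ℙ ℙ) (hσinv : Measurable σinv)
    (hinv₁ : Function.LeftInverse σinv σ) (hinv₂ : Function.RightInverse σinv σ)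
    (hErg : Ergodic σ ℙ)
    {Bw Bs Bss : Type*}
    [NormedAddCommGroup Bw] [NormedSpace ℝ Bw] [CompleteSpace Bw]
    [NormedAddCommGroup Bs] [NormedSpace ℝ Bs]
    [NormedAddCommGroup Bss] [NormedSpace ℝ Bss]
    [MeasurableSpace Bss] [BorelSpace Bss]
    (ιs : Bs →L[ℝ] Bw) (ιss : Bss →L[ℝ] Bs)
    (hιs : ∀ x : Bs, ‖ιs x‖ ≤ ‖x‖) (hιss : ∀ x : Bss, ‖ιss x‖ ≤ ‖x‖)
    (I : Set ℝ) (hIopen : IsOpen I) (hIsub : I ⊆ Set.Ioo (-1) 1) (hI0 : (0 : ℝ) ∈ I)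
    (Lw : ℝ → Ω → Bw →L[ℝ] Bw) (Ls : ℝ → Ω → Bs →L[ℝ] Bs) (Lss : ℝ → Ω → Bss →L[ℝ] Bss)
    (hcomp_s : ∀ ε ω x, ιs (Ls ε ω x) = Lw ε ω (ιs x))
    (hcomp_ss : ∀ ε ω x, ιss (Lss ε ω x) = Ls ε ω (ιss x))
    (ψ : Bw →L[ℝ] ℝ) (hψne : ψ ≠ 0)
    (hψinv : ∀ ε ∈ I, ∀ ω : Ω, ∀ x : Bw, ψ (Lw ε ω x) = ψ x)
    (p1 p2 p4 : ℝ) (hp1 : 0 < p1) (hp2 : 0 < p2) (hp4 : 0 < p4)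
    (C1 C2 C4 : Ω → ℝ)
    (hC1 : MemLpRV ℙ p1 C1) (hC2 : MemLpRV ℙ p2 C2) (hC4 : MemLpRV ℙ p4 C4)
    (β r : ℝ) (hβ : 1 < β) (hr : 0 < r) (hβr : 1 < β - r)
    (hp1r : 1 < p1 * r / 3) (hp2r : 1 < p2 * r / 3) (hp4r : 1 < p4 * r / 3)
    (Ω' : Set Ω) (hΩ' : ℙ Ω'ᶜ = 0)
    (h : ℝ → Ω → Bss)
    (hmeas : ∀ ε ∈ I, Measurable (h ε))
    -- (C2)
    (cond2 : ∀ n : ℕ, 1 ≤ n → ∀ ε ∈ I, ∀ ω ∈ Ω', ∀ x : Bs, ψ (ιs x) = 0 →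
      ‖iterOp σ (Lw ε) n ω (ιs x)‖ ≤ C1 ω * (n : ℝ) ^ (-β) * ‖x‖)
    -- (C3)
    (cond3 : ∀ ε ∈ I, ∀ ω ∈ Ω', ∀ x : Bs,
      ‖Lw ε ω (ιs x) - Lw 0 ω (ιs x)‖ ≤ C2 ω * |ε| * ‖x‖)
    -- (C5)
    (cond5a : ∀ ε ∈ I, ∀ ω ∈ Ω', Lss ε ω (h ε ω) = h ε (σ ω))
    (cond5b : ∀ ε ∈ I, ∀ ω ∈ Ω', ψ (ιs (ιss (h ε ω))) = 1)
    (cond5c : ∀ ε ∈ I, ∀ ω ∈ Ω', ‖h ε ω‖ ≤ C4 ω) :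
    ∃ Ω'' : Set Ω, ℙ Ω''ᶜ = 0 ∧
      ∀ ω ∈ Ω'', ∀ ε ∈ I,
        Summable (fun n : ℕ =>
          ‖iterOp σ (Lw ε) n (σinv^[n] ω)
            (ιs (Ls ε (σinv^[n + 1] ω) (ιss (h 0 (σinv^[n + 1] ω))) -
              Ls 0 (σinv^[n + 1] ω) (ιss (h 0 (σinv^[n + 1] ω)))))‖) ∧
        HasSum (fun n : ℕ =>
          iterOp σ (Lw ε) n (σinv^[n] ω)
            (ιs (Ls ε (σinv^[n + 1] ω) (ιss (h 0 (σinv^[n + 1] ω))) -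
              Ls 0 (σinv^[n + 1] ω) (ιss (h 0 (σinv^[n + 1] ω))))))
          (ιs (ιss (h ε ω)) - ιs (ιss (h 0 ω))) :=
  stmt_15_general ℙ σ σinv hσ hσinv hinv₁ hinv₂ ιs ιss hιss I hI0 Lw Ls Lss hcomp_s hcomp_ss ψ p1 p4
    hp1 hp4 C1 C4 hC1 hC4 β r hr hβr hp1r hp4r Ω' hΩ' h cond2 cond5a cond5b cond5c
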